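/- Let A be an n×d matrix, b ∈ ℝⁿ, and let x* minimize f(x) = ‖Ax − b‖². Suppose S is a matrix such that (1+ε)⁻¹‖[A|b]y‖ ≤ ‖S[A|b]y‖ ≤ (1+ε)‖[A|b]y‖ for all y ∈ ℝ^{d+1}, with ε ∈ (0,1]. If x₀ = argmin_x ‖SAx − Sb‖², then f(x₀) ≤ (1+ε)⁴ · f(x*). -/
import Mathlib


open Matrix

/-- The matrix `[A|b]`: `A` with `b` appended as an extra column. -/
def Matrix.appendCol {n d : ℕ} (A : Matrix (Fin n) (Fin d) ℝ) (b : Fin n → ℝ) :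
    Matrix (Fin n) (Fin (d + 1)) ℝ :=
  Matrix.of fun i => Fin.snoc (A i) (b i)

lemma appendCol_mulVec_snoc {n d : ℕ} (A : Matrix (Fin n) (Fin d) ℝ) (b : Fin n → ℝ)
    (x : Fin d → ℝ) :
    (A.appendCol b) *ᵥ (Fin.snoc x (-1)) = A *ᵥ x - b := by
  funext i
  simp [Matrix.appendCol, Matrix.mulVec, dotProduct, Fin.sum_univ_castSucc, Fin.snoc_castSucc, sub_eq_add_neg]

/-- Sketch-and-solve guarantee for least squares: if `S` is a subspace embedding for
`[A|b]` with distortion `1+ε` and `x₀` minimizes the sketched objective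
`‖SAx − Sb‖²`, then `f(x₀) ≤ (1+ε)⁴ f(x*)` where `x*` minimizes `f(x) = ‖Ax − b‖²`. -/
theorem sketch_and_solve_least_squares {n d mS : ℕ}
    (A : Matrix (Fin n) (Fin d) ℝ) (b : Fin n → ℝ)
    (S : Matrix (Fin mS) (Fin n) ℝ)
    (ε : ℝ) (hε0 : 0 < ε) (hε1 : ε ≤ 1)
    (hemb : ∀ y : Fin (d + 1) → ℝ,
      (1 + ε)⁻¹ * Real.sqrt (∑ i, ((A.appendCol b) *ᵥ y) i ^ 2) ≤
        Real.sqrt (∑ i, (S *ᵥ ((A.appendCol b) *ᵥ y)) i ^ 2) ∧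
      Real.sqrt (∑ i, (S *ᵥ ((A.appendCol b) *ᵥ y)) i ^ 2) ≤
        (1 + ε) * Real.sqrt (∑ i, ((A.appendCol b) *ᵥ y) i ^ 2))
    (xstar x₀ : Fin d → ℝ)
    (hxstar : ∀ x : Fin d → ℝ,
      (∑ i, (A *ᵥ xstar - b) i ^ 2) ≤ (∑ i, (A *ᵥ x - b) i ^ 2))
    (hx₀ : ∀ x : Fin d → ℝ,
      (∑ i, ((S * A) *ᵥ x₀ - S *ᵥ b) i ^ 2) ≤ (∑ i, ((S * A) *ᵥ x - S *ᵥ b) i ^ 2)) :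
    (∑ i, (A *ᵥ x₀ - b) i ^ 2) ≤ (1 + ε) ^ 4 * (∑ i, (A *ᵥ xstar - b) i ^ 2) := by
  have hε : (0:ℝ) < 1 + ε := by linarith
  -- rewrite hemb for specific x via snoc
  have key : ∀ x : Fin d → ℝ,
      (1 + ε)⁻¹ * Real.sqrt (∑ i, (A *ᵥ x - b) i ^ 2) ≤
        Real.sqrt (∑ i, ((S * A) *ᵥ x - S *ᵥ b) i ^ 2) ∧
      Real.sqrt (∑ i, ((S * A) *ᵥ x - S *ᵥ b) i ^ 2) ≤
        (1 + ε) * Real.sqrt (∑ i, (A *ᵥ x - b) i ^ 2) := by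
    intro x
    have h := hemb (Fin.snoc x (-1))
    rw [appendCol_mulVec_snoc] at h
    have hS : S *ᵥ (A *ᵥ x - b) = (S * A) *ᵥ x - S *ᵥ b := by
      rw [Matrix.mulVec_sub, Matrix.mulVec_mulVec]
    rwa [hS] at h
  set f0 := ∑ i, (A *ᵥ x₀ - b) i ^ 2 with hf0
  set fs := ∑ i, (A *ᵥ xstar - b) i ^ 2 with hfs
  have hf0nn : 0 ≤ f0 := Finset.sum_nonneg fun i _ => sq_nonneg _
  have hfsnn : 0 ≤ fs := Finset.sum_nonneg fun i _ => sq_nonneg _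
  have h1 := (key x₀).1
  have h2 := (key xstar).2
  have hg : Real.sqrt (∑ i, ((S * A) *ᵥ x₀ - S *ᵥ b) i ^ 2) ≤
      Real.sqrt (∑ i, ((S * A) *ᵥ xstar - S *ᵥ b) i ^ 2) :=
    Real.sqrt_le_sqrt (hx₀ xstar)
  have hchain : (1 + ε)⁻¹ * Real.sqrt f0 ≤ (1 + ε) * Real.sqrt fs :=
    le_trans h1 (le_trans hg h2)
  have hsqrt : Real.sqrt f0 ≤ (1 + ε) ^ 2 * Real.sqrt fs := by
    have := mul_le_mul_of_nonneg_left hchain hε.le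
    rw [← mul_assoc, mul_inv_cancel₀ hε.ne', one_mul] at this
    calc Real.sqrt f0 ≤ (1 + ε) * ((1 + ε) * Real.sqrt fs) := this
    _ = (1 + ε) ^ 2 * Real.sqrt fs := by ring
  have := mul_self_le_mul_self (Real.sqrt_nonneg f0) hsqrt
  rw [Real.mul_self_sqrt hf0nn] at this
  calc f0 ≤ ((1 + ε) ^ 2 * Real.sqrt fs) * ((1 + ε) ^ 2 * Real.sqrt fs) := this
  _ = (1 + ε) ^ 4 * (Real.sqrt fs * Real.sqrt fs) := by ring
  _ = (1 + ε) ^ 4 * fs := by rw [Real.mul_self_sqrt hfsnn]
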